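/- arXiv:1501.00178 — 3 statements merged into one kernel-verified Lean document; each statement's English description precedes it below -/
import Mathlib

section
/- Let $\{b_1,\ldots,b_n\}$ be an LLL-reduced basis of an integral unimodular lattice $L$, let $\sigma$ be an automorphism of $L$ (an inner-product-preserving group automorphism), and write $\sigma(b_i) = \sum_{j=1}^n a_{ij} b_j$ with $a_{ij} \in {\mathbb Z}$. Then $|a_{ij}| \le 3^{n-1}$ for all $i,j$. -/
/-- The Gram–Schmidt orthogonalization of a family of vectors in `ℝⁿ`. -/
noncomputable def gso {n : ℕ} (b : Fin n → EuclideanSpace ℝ (Fin n)) :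
    Fin n → EuclideanSpace ℝ (Fin n) :=
  @InnerProductSpace.gramSchmidt ℝ _ _ _ _ (Fin n) inferInstance inferInstance
    (inferInstance : WellFoundedLT (Fin n)) b

/-!
Write `d k = ‖b*_k‖²` and `μ l k` for the Gram–Schmidt coefficients. The Lovász condition says
that `2^k d k` is nondecreasing in `k`. The leading Gram minors are positive integers equal to
`∏_{j ≤ k} d j`, and the full one is `1`; hence `1 ≤ 2^k d k ≤ 2^(n-1)`, and with size reduction
`‖b i‖² ≤ 2^i d i ≤ 2^(n-1)`. As `σ` is an isometry, Cauchy–Schwarz bounds the Gram–Schmidt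
coordinates `⟪σ b_i, b*_k⟫ / d k` of `σ b_i` by `2^(n-1)`. These coordinates equal
`a_ik + ∑_{l>k} a_il μ_lk` with `|μ_lk| ≤ 1/2`, and solving this triangular system from the last
index down gives `|a_ik| ≤ (3/2)^(n-1-k) 2^(n-1) ≤ 3^(n-1)`.
-/

open Finset InnerProductSpace Matrix

section GramSchmidt

variable {E : Type*} [NormedAddCommGroup E] [InnerProductSpace ℝ E]
  {ι : Type*} [LinearOrder ι] [LocallyFiniteOrderBot ι] [WellFoundedLT ι]

-- The coefficient of `gramSchmidt ℝ b k` in `b p`; the diagonal is set to `1` so that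
-- `sum_gramSchmidtCoeff_smul` holds even where `gramSchmidt ℝ b p = 0`.
noncomputable def gramSchmidtCoeff (b : ι → E) (p k : ι) : ℝ :=
  if k = p then 1 else inner ℝ (b p) (gramSchmidt ℝ b k) / ‖gramSchmidt ℝ b k‖ ^ 2

@[simp]
lemma gramSchmidtCoeff_self (b : ι → E) (p : ι) : gramSchmidtCoeff b p p = 1 := if_pos rfl

lemma gramSchmidtCoeff_of_lt (b : ι → E) {p k : ι} (h : p < k) : gramSchmidtCoeff b p k = 0 := by
  rw [gramSchmidtCoeff, if_neg h.ne', real_inner_comm, gramSchmidt_inv_triangular ℝ b h,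
    zero_div]

variable [Fintype ι]

lemma sum_gramSchmidtCoeff_smul (b : ι → E) (p : ι) :
    ∑ k, gramSchmidtCoeff b p k • gramSchmidt ℝ b k = b p := by
  rw [← sum_subset (subset_univ (Iic p)), ← Iio_insert, sum_insert notMem_Iio_self,
    gramSchmidtCoeff_self, one_smul, gramSchmidt_def'' ℝ b p]
  · congr 1
    refine sum_congr rfl fun k hk => ?_
    rw [gramSchmidtCoeff, if_neg (mem_Iio.mp hk).ne, real_inner_comm]
    rfl
  · intro k _ hk
    rw [gramSchmidtCoeff_of_lt b (not_le.mp (mt mem_Iic.mpr hk)), zero_smul]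

lemma inner_gramSchmidt_eq_coeff_mul (b : ι → E) (p k : ι) :
    inner ℝ (b p) (gramSchmidt ℝ b k) = gramSchmidtCoeff b p k * ‖gramSchmidt ℝ b k‖ ^ 2 := by
  conv_lhs => rw [← sum_gramSchmidtCoeff_smul b p]
  rw [sum_inner, sum_eq_single k, real_inner_smul_left, real_inner_self_eq_norm_sq]
  · intro l _ hl
    rw [real_inner_smul_left, gramSchmidt_orthogonal ℝ b hl, mul_zero]
  · simp

lemma inner_eq_sum_gramSchmidtCoeff (b : ι → E) (p q : ι) :
    inner ℝ (b p) (b q) =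
      ∑ k, gramSchmidtCoeff b p k * gramSchmidtCoeff b q k * ‖gramSchmidt ℝ b k‖ ^ 2 := by
  conv_lhs => rw [← sum_gramSchmidtCoeff_smul b p]
  refine (sum_inner _ _ _).trans (sum_congr rfl fun k _ => ?_)
  rw [real_inner_smul_left, real_inner_comm, inner_gramSchmidt_eq_coeff_mul, mul_assoc]

lemma det_gram_of_isLowerSet (b : ι → E) {S : Finset ι} (hS : IsLowerSet (S : Set ι)) :
    (gram ℝ fun k : S => b k).det = ∏ k ∈ S, ‖gramSchmidt ℝ b k‖ ^ 2 := by
  set M : Matrix S S ℝ := of fun p k => gramSchmidtCoeff b p k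
  have hM : M.IsLowerTriangular := fun p k (h : p < k) => gramSchmidtCoeff_of_lt b h
  have hfac : gram ℝ (fun k : S => b k) =
      M * diagonal (fun k : S => ‖gramSchmidt ℝ b k‖ ^ 2) * Mᵀ := by
    ext p q
    rw [gram_apply, inner_eq_sum_gramSchmidtCoeff, mul_apply]
    simp only [mul_diagonal, transpose_apply, M, of_apply]
    rw [sum_coe_sort S fun k => gramSchmidtCoeff b p k * ‖gramSchmidt ℝ b k‖ ^ 2 *
      gramSchmidtCoeff b q k, sum_subset (subset_univ S)]
    · exact sum_congr rfl fun k _ => by ring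
    · intro k _ hk
      have hpk : (p : ι) < k := not_le.mp fun h => hk (hS h p.2)
      rw [gramSchmidtCoeff_of_lt b hpk, zero_mul, zero_mul]
  rw [hfac, det_mul, det_mul, det_transpose, det_of_isLowerTriangular M hM, det_diagonal]
  simp [M, prod_attach S fun k => ‖gramSchmidt ℝ b k‖ ^ 2]

lemma prod_norm_sq_gramSchmidt_eq_det_gram (b : ι → E) :
    ∏ k, ‖gramSchmidt ℝ b k‖ ^ 2 = (gram ℝ b).det := by
  rw [← det_gram_of_isLowerSet b (S := univ) (by simp [isLowerSet_univ])]
  exact det_submatrix_equiv_self (Equiv.subtypeUnivEquiv mem_univ) (gram ℝ b)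

lemma inner_sum_smul_div_norm_sq_gramSchmidt [LocallyFiniteOrderTop ι] (b : ι → E) (a : ι → ℝ)
    {k : ι} (hk : gramSchmidt ℝ b k ≠ 0) :
    inner ℝ (∑ l, a l • b l) (gramSchmidt ℝ b k) / ‖gramSchmidt ℝ b k‖ ^ 2 =
      a k + ∑ l ∈ Ioi k, a l * gramSchmidtCoeff b l k := by
  have hk' : ‖gramSchmidt ℝ b k‖ ^ 2 ≠ 0 := by positivity
  simp only [sum_inner, real_inner_smul_left, inner_gramSchmidt_eq_coeff_mul, ← mul_assoc,
    ← sum_mul, mul_div_cancel_right₀ _ hk']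
  rw [← sum_subset (subset_univ (Ici k)), ← Ioi_insert, sum_insert notMem_Ioi_self,
    gramSchmidtCoeff_self, mul_one]
  intro l _ hl
  rw [gramSchmidtCoeff_of_lt b (not_le.mp (mt mem_Ici.mpr hl)), mul_zero]

end GramSchmidt

lemma abs_inner_div_norm_sq_le {E : Type*} [NormedAddCommGroup E] [InnerProductSpace ℝ E]
    {v w : E} {C : ℝ} (hC : 0 ≤ C) (h : ‖v‖ ^ 2 ≤ C ^ 2 * ‖w‖ ^ 2) :
    |inner ℝ v w / ‖w‖ ^ 2| ≤ C := by
  rcases eq_or_ne w 0 with rfl | hw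
  · simpa using hC
  have hvw : ‖v‖ ≤ C * ‖w‖ := by
    rw [← mul_pow] at h
    exact (pow_le_pow_iff_left₀ (norm_nonneg v) (by positivity) two_ne_zero).mp h
  rw [abs_div, abs_of_nonneg (by positivity : (0:ℝ) ≤ ‖w‖ ^ 2), div_le_iff₀ (by positivity)]
  calc |inner ℝ v w| ≤ ‖v‖ * ‖w‖ := abs_real_inner_le_norm v w
    _ ≤ C * ‖w‖ * ‖w‖ := by gcongr
    _ = C * ‖w‖ ^ 2 := by ring

lemma abs_le_add_half_sum_Ioi {ι : Type*} [Preorder ι] [LocallyFiniteOrderTop ι]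
    {x : ι → ℝ} {c : ι → ι → ℝ} (hc : ∀ l k, k < l → |c l k| ≤ 1 / 2) {C : ℝ} {k : ι}
    (h : |x k + ∑ l ∈ Ioi k, x l * c l k| ≤ C) : |x k| ≤ C + (∑ l ∈ Ioi k, |x l|) / 2 := by
  have htail : |∑ l ∈ Ioi k, x l * c l k| ≤ (∑ l ∈ Ioi k, |x l|) / 2 := by
    rw [sum_div]
    refine (abs_sum_le_sum_abs _ _).trans (sum_le_sum fun l hl => ?_)
    rw [abs_mul]
    nlinarith [hc l k (mem_Ioi.mp hl), abs_nonneg (x l)]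
  have := abs_sub (x k + ∑ l ∈ Ioi k, x l * c l k) (∑ l ∈ Ioi k, x l * c l k)
  rw [add_sub_cancel_right] at this
  linarith

lemma Matrix.one_le_det_of_isInt {m : Type*} [Fintype m] [DecidableEq m] {A : Matrix m m ℝ}
    (hA : ∀ i j, ∃ z : ℤ, A i j = z) (hpos : 0 < A.det) : 1 ≤ A.det := by
  choose Z hZ using hA
  have hAZ : A = (Int.castRingHom ℝ).mapMatrix (of Z) := by ext i j; simp [hZ]
  rw [hAZ, ← RingHom.map_det, eq_intCast] at hpos ⊢
  exact_mod_cast Int.cast_pos.mp hpos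

section IntegralGram

variable {E : Type*} [NormedAddCommGroup E] [InnerProductSpace ℝ E]
  {ι : Type*} [LinearOrder ι] [LocallyFiniteOrderBot ι] [WellFoundedLT ι] [Fintype ι]
  {b : ι → E}

lemma norm_sq_gramSchmidt_pos (hdet : (gram ℝ b).det = 1) (k : ι) :
    0 < ‖gramSchmidt ℝ b k‖ ^ 2 := by
  have h := prod_norm_sq_gramSchmidt_eq_det_gram b
  rw [hdet] at h
  refine (sq_nonneg _).lt_of_ne' fun hk => ?_
  rw [prod_eq_zero (mem_univ k) hk] at h
  exact zero_ne_one h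

lemma one_le_prod_norm_sq_gramSchmidt (hint : ∀ i j, ∃ z : ℤ, inner ℝ (b i) (b j) = z)
    (hdet : (gram ℝ b).det = 1) {S : Finset ι} (hS : IsLowerSet (S : Set ι)) :
    1 ≤ ∏ k ∈ S, ‖gramSchmidt ℝ b k‖ ^ 2 := by
  rw [← det_gram_of_isLowerSet b hS]
  refine one_le_det_of_isInt (fun p q => hint p q) ?_
  rw [det_gram_of_isLowerSet b hS]
  exact prod_pos fun k _ => norm_sq_gramSchmidt_pos hdet k

lemma prod_Ici_norm_sq_gramSchmidt_le_one [LocallyFiniteOrderTop ι]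
    (hint : ∀ i j, ∃ z : ℤ, inner ℝ (b i) (b j) = z) (hdet : (gram ℝ b).det = 1) (k : ι) :
    ∏ j ∈ Ici k, ‖gramSchmidt ℝ b j‖ ^ 2 ≤ 1 := by
  have hsplit := prod_mul_prod_compl (Iio k) fun j => ‖gramSchmidt ℝ b j‖ ^ 2
  rw [show (Iio k)ᶜ = Ici k by ext; simp, prod_norm_sq_gramSchmidt_eq_det_gram, hdet] at hsplit
  have hlow := one_le_prod_norm_sq_gramSchmidt hint hdet (S := Iio k) (by simp [isLowerSet_Iio])
  have hpos := prod_pos fun j (_ : j ∈ Ici k) => norm_sq_gramSchmidt_pos hdet j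
  nlinarith

end IntegralGram

section LLL

variable {n : ℕ} {E : Type*} [NormedAddCommGroup E] [InnerProductSpace ℝ E]

lemma monotone_two_pow_mul_of_le_two_mul {d : Fin n → ℝ}
    (h : ∀ i : Fin n, ∀ h : (i : ℕ) + 1 < n, d i ≤ 2 * d ⟨i + 1, h⟩) :
    Monotone fun k : Fin n => 2 ^ (k : ℕ) * d k := by
  cases n with
  | zero => exact fun k => k.elim0
  | succ m =>
    refine Fin.monotone_iff_le_succ.mpr fun i => ?_
    calc 2 ^ (i : ℕ) * d i.castSucc ≤ 2 ^ (i : ℕ) * (2 * d i.succ) := by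
          gcongr; exact h i.castSucc (by simp)
      _ = 2 ^ ((i.succ : Fin (m + 1)) : ℕ) * d i.succ := by rw [Fin.val_succ, pow_succ]; ring

lemma one_le_two_pow_mul_of_one_le_prod_Iic {d : Fin n → ℝ} (hd : ∀ k, 0 ≤ d k)
    (hmono : Monotone fun k : Fin n => 2 ^ (k : ℕ) * d k) {k : Fin n} (h : 1 ≤ ∏ j ∈ Iic k, d j) :
    1 ≤ 2 ^ (k : ℕ) * d k := by
  have hle : ∏ j ∈ Iic k, d j ≤ (2 ^ (k : ℕ) * d k) ^ #(Iic k) := by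
    rw [← prod_const]
    refine prod_le_prod (fun j _ => hd j) fun j hj => ?_
    calc d j ≤ 2 ^ (j : ℕ) * d j := le_mul_of_one_le_left (hd j) (one_le_pow₀ one_le_two)
      _ ≤ 2 ^ (k : ℕ) * d k := hmono (mem_Iic.mp hj)
  exact (one_le_pow_iff_of_nonneg (mul_nonneg (by positivity) (hd k))
    (card_ne_zero_of_mem (mem_Iic.mpr le_rfl))).mp (h.trans hle)

lemma two_pow_mul_le_of_prod_Ici_le_one {d : Fin n → ℝ} (hd : ∀ k, 0 ≤ d k)
    (hmono : Monotone fun k : Fin n => 2 ^ (k : ℕ) * d k) {k : Fin n} (h : ∏ j ∈ Ici k, d j ≤ 1) :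
    2 ^ (k : ℕ) * d k ≤ 2 ^ (n - 1) := by
  have hle : (2 ^ (k : ℕ) * d k) ^ #(Ici k) ≤ (2 ^ (n - 1)) ^ #(Ici k) :=
    calc (2 ^ (k : ℕ) * d k) ^ #(Ici k) = ∏ j ∈ Ici k, 2 ^ (k : ℕ) * d k := (prod_const _).symm
      _ ≤ ∏ j ∈ Ici k, 2 ^ (n - 1) * d j := by
          refine prod_le_prod (fun _ _ => mul_nonneg (by positivity) (hd k)) fun j hj => ?_
          refine (hmono (mem_Ici.mp hj)).trans ?_
          have hj : (j : ℕ) ≤ n - 1 := by omega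
          exact mul_le_mul_of_nonneg_right (pow_le_pow_right₀ one_le_two hj) (hd j)
      _ = (2 ^ (n - 1)) ^ #(Ici k) * ∏ j ∈ Ici k, d j := by rw [prod_mul_distrib, prod_const]
      _ ≤ (2 ^ (n - 1)) ^ #(Ici k) := mul_le_of_le_one_right (by positivity) h
  exact (pow_le_pow_iff_left₀ (mul_nonneg (by positivity) (hd k)) (by positivity)
    (card_ne_zero_of_mem (mem_Ici.mpr le_rfl))).mp hle

lemma Fin.sum_Ioi_pow_sub_eq_sum_range (r : ℝ) (k : Fin n) :
    ∑ l ∈ Ioi k, r ^ (n - 1 - l) = ∑ j ∈ range (n - 1 - k), r ^ j := by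
  have hmap : ∑ l ∈ Ioi k, r ^ (n - 1 - l) = ∑ m ∈ Ioo (k : ℕ) n, r ^ (n - 1 - m) := by
    rw [← Fin.map_valEmbedding_Ioi, sum_map]
    rfl
  rw [hmap, ← sum_range_reflect, ← Finset.Ico_add_one_left_eq_Ioo, sum_Ico_eq_sum_range]
  exact sum_congr (by congr 1; omega) fun j hj => by
    have := mem_range.mp hj
    congr 1
    omega

lemma abs_le_three_halves_pow_mul {x : Fin n → ℝ} {C : ℝ}
    (h : ∀ k, |x k| ≤ C + (∑ l ∈ Ioi k, |x l|) / 2) (k : Fin n) :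
    |x k| ≤ (3 / 2) ^ (n - 1 - k) * C := by
  induction k using WellFoundedGT.induction with
  | _ k ih =>
    have hsum : ∑ l ∈ Ioi k, |x l| ≤ ∑ l ∈ Ioi k, (3 / 2) ^ (n - 1 - l) * C :=
      sum_le_sum fun l hl => ih l (mem_Ioi.mp hl)
    have hgeom : ∑ l ∈ Ioi k, (3 / 2 : ℝ) ^ (n - 1 - l) = 2 * ((3 / 2) ^ (n - 1 - k) - 1) := by
      rw [Fin.sum_Ioi_pow_sub_eq_sum_range, geom_sum_eq (by norm_num)]
      ring
    rw [← sum_mul, hgeom] at hsum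
    linarith [h k]

lemma Fin.sum_Iio_half_pow (i : Fin n) :
    ∑ k ∈ Iio i, (1 / 2 : ℝ) ^ (k : ℕ) = 2 - 2 * (1 / 2) ^ (i : ℕ) := by
  have hmap : ∑ k ∈ Iio i, (1 / 2 : ℝ) ^ (k : ℕ) = ∑ m ∈ range i, (1 / 2 : ℝ) ^ m := by
    rw [← Nat.Iio_eq_range, ← Fin.map_valEmbedding_Iio, sum_map]
    rfl
  rw [hmap, geom_sum_eq (by norm_num)]
  ring

lemma norm_sq_le_two_pow_mul_norm_sq_gramSchmidt (b : Fin n → E) {i : Fin n}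
    (hsize : ∀ j < i, |gramSchmidtCoeff b i j| ≤ 1 / 2)
    (hmono : Monotone fun k : Fin n => 2 ^ (k : ℕ) * ‖gramSchmidt ℝ b k‖ ^ 2) :
    ‖b i‖ ^ 2 ≤ 2 ^ (i : ℕ) * ‖gramSchmidt ℝ b i‖ ^ 2 := by
  set e := 2 ^ (i : ℕ) * ‖gramSchmidt ℝ b i‖ ^ 2
  have hdi : ‖gramSchmidt ℝ b i‖ ^ 2 = (1 / 2) ^ (i : ℕ) * e := by
    rw [← mul_assoc, ← mul_pow]; norm_num
  have hterm : ∀ k ∈ Iio i, gramSchmidtCoeff b i k * gramSchmidtCoeff b i k *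
      ‖gramSchmidt ℝ b k‖ ^ 2 ≤ e / 4 * (1 / 2) ^ (k : ℕ) := by
    intro k hk
    have hμ : gramSchmidtCoeff b i k * gramSchmidtCoeff b i k ≤ 1 / 4 := by
      nlinarith [hsize k (mem_Iio.mp hk), abs_mul_abs_self (gramSchmidtCoeff b i k),
        abs_nonneg (gramSchmidtCoeff b i k)]
    have hdk : ‖gramSchmidt ℝ b k‖ ^ 2 ≤ (1 / 2) ^ (k : ℕ) * e := by
      calc ‖gramSchmidt ℝ b k‖ ^ 2
          = (1 / 2) ^ (k : ℕ) * (2 ^ (k : ℕ) * ‖gramSchmidt ℝ b k‖ ^ 2) := by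
            rw [← mul_assoc, ← mul_pow]; norm_num
        _ ≤ (1 / 2) ^ (k : ℕ) * e := by gcongr; exact hmono (mem_Iio.mp hk).le
    calc _ ≤ 1 / 4 * ((1 / 2) ^ (k : ℕ) * e) := by gcongr
      _ = e / 4 * (1 / 2) ^ (k : ℕ) := by ring
  rw [← real_inner_self_eq_norm_sq, inner_eq_sum_gramSchmidtCoeff,
    ← sum_subset (subset_univ (Iic i)), ← Iio_insert, sum_insert notMem_Iio_self,
    gramSchmidtCoeff_self, one_mul, one_mul]
  · have hsum := sum_le_sum hterm
    rw [← mul_sum, Fin.sum_Iio_half_pow] at hsum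
    have hpe : (1 / 2 : ℝ) ^ (i : ℕ) * e ≤ e :=
      mul_le_of_le_one_left (by positivity) (pow_le_one₀ (by norm_num) (by norm_num))
    rw [hdi]
    linarith
  · intro k _ hk
    rw [gramSchmidtCoeff_of_lt b (not_le.mp (mt mem_Iic.mpr hk)), zero_mul, zero_mul]

lemma abs_le_add_half_sum_Ioi_of_norm_sq_le (b : Fin n → E)
    (hsize : ∀ i j, j < i → |gramSchmidtCoeff b i j| ≤ 1 / 2)
    (hlow : ∀ k : Fin n, 1 ≤ 2 ^ (k : ℕ) * ‖gramSchmidt ℝ b k‖ ^ 2) {x : Fin n → ℝ}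
    (hx : ‖∑ l, x l • b l‖ ^ 2 ≤ 2 ^ (n - 1)) (k : Fin n) :
    |x k| ≤ 2 ^ (n - 1) + (∑ l ∈ Ioi k, |x l|) / 2 := by
  refine abs_le_add_half_sum_Ioi hsize ?_
  have hk : gramSchmidt ℝ b k ≠ 0 := fun h0 => absurd (hlow k) (by simp [h0])
  rw [← inner_sum_smul_div_norm_sq_gramSchmidt b x hk]
  refine abs_inner_div_norm_sq_le (by positivity) ?_
  calc _ ≤ (2 : ℝ) ^ (n - 1) * (2 ^ (k : ℕ) * ‖gramSchmidt ℝ b k‖ ^ 2) := by nlinarith [hlow k]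
    _ ≤ 2 ^ (n - 1) * (2 ^ (n - 1) * ‖gramSchmidt ℝ b k‖ ^ 2) := by
        gcongr
        · exact one_le_two
        · omega
    _ = (2 ^ (n - 1)) ^ 2 * ‖gramSchmidt ℝ b k‖ ^ 2 := by ring

end LLL

theorem stmt_4_general (n : ℕ) (b : Fin n → EuclideanSpace ℝ (Fin n))
    (hint : ∀ i j : Fin n, ∃ z : ℤ, (inner ℝ (b i) (b j) : ℝ) = z)
    (hdet : (Matrix.of fun i j : Fin n => (inner ℝ (b i) (b j) : ℝ)).det = 1)
    (hsize : ∀ i j : Fin n, j < i →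
      |(inner ℝ (b i) (gso b j) : ℝ) / ‖gso b j‖ ^ 2| ≤ 1 / 2)
    (hlovasz : ∀ i : Fin n, ∀ h : (i : ℕ) + 1 < n,
      ‖gso b i‖ ^ 2 ≤ 2 * ‖gso b ⟨(i : ℕ) + 1, h⟩‖ ^ 2)
    -- `a` is the integer matrix of an automorphism `σ` of the lattice,
    -- i.e. `σ(b_i) = ∑_j a_ij b_j`, `σ` preserves the inner product, and `a`
    -- is invertible over `ℤ`:
    (a : Matrix (Fin n) (Fin n) ℤ)
    (hpres : ∀ i j : Fin n,
      (inner ℝ (∑ k, (a i k : ℝ) • b k) (∑ k, (a j k : ℝ) • b k) : ℝ) =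
        (inner ℝ (b i) (b j) : ℝ)) :
    ∀ i j : Fin n, |a i j| ≤ 3 ^ (n - 1) := by
  have hcoeff : ∀ i j, j < i → |gramSchmidtCoeff b i j| ≤ 1 / 2 := fun i j h => by
    rw [gramSchmidtCoeff, if_neg h.ne]; exact hsize i j h
  have hmono : Monotone fun k : Fin n => 2 ^ (k : ℕ) * ‖gramSchmidt ℝ b k‖ ^ 2 :=
    monotone_two_pow_mul_of_le_two_mul hlovasz
  have hlow : ∀ k : Fin n, 1 ≤ 2 ^ (k : ℕ) * ‖gramSchmidt ℝ b k‖ ^ 2 := fun k =>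
    one_le_two_pow_mul_of_one_le_prod_Iic (fun _ => sq_nonneg _) hmono
      (one_le_prod_norm_sq_gramSchmidt hint hdet (by simp [isLowerSet_Iic]))
  have hup : ∀ k : Fin n, 2 ^ (k : ℕ) * ‖gramSchmidt ℝ b k‖ ^ 2 ≤ 2 ^ (n - 1) := fun k =>
    two_pow_mul_le_of_prod_Ici_le_one (fun _ => sq_nonneg _) hmono
      (prod_Ici_norm_sq_gramSchmidt_le_one hint hdet k)
  intro i j
  have hv : ‖∑ k, (a i k : ℝ) • b k‖ ^ 2 ≤ 2 ^ (n - 1) := by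
    rw [← real_inner_self_eq_norm_sq, hpres i i, real_inner_self_eq_norm_sq]
    exact (norm_sq_le_two_pow_mul_norm_sq_gramSchmidt b (hcoeff i) hmono).trans (hup i)
  have hbound : |(a i j : ℝ)| ≤ 3 ^ (n - 1) :=
    calc |(a i j : ℝ)| ≤ (3 / 2) ^ (n - 1 - j) * 2 ^ (n - 1) :=
          abs_le_three_halves_pow_mul (abs_le_add_half_sum_Ioi_of_norm_sq_le b hcoeff hlow hv) j
      _ ≤ (3 / 2) ^ (n - 1) * 2 ^ (n - 1) :=
          mul_le_mul_of_nonneg_right (pow_le_pow_right₀ (by norm_num) (Nat.sub_le _ _))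
            (by positivity)
      _ = 3 ^ (n - 1) := by rw [← mul_pow]; norm_num
  exact_mod_cast hbound

/-- The matrix of a lattice automorphism with respect to an LLL-reduced basis
of an integral unimodular lattice has entries bounded by `3^(n-1)`. -/
theorem stmt_4 (n : ℕ) (b : Fin n → EuclideanSpace ℝ (Fin n))
    (hint : ∀ i j : Fin n, ∃ z : ℤ, (inner ℝ (b i) (b j) : ℝ) = z)
    (hdet : (Matrix.of fun i j : Fin n => (inner ℝ (b i) (b j) : ℝ)).det = 1)
    (hsize : ∀ i j : Fin n, j < i →
      |(inner ℝ (b i) (gso b j) : ℝ) / ‖gso b j‖ ^ 2| ≤ 1 / 2)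
    (hlovasz : ∀ i : Fin n, ∀ h : (i : ℕ) + 1 < n,
      ‖gso b i‖ ^ 2 ≤ 2 * ‖gso b ⟨(i : ℕ) + 1, h⟩‖ ^ 2)
    -- `a` is the integer matrix of an automorphism `σ` of the lattice,
    -- i.e. `σ(b_i) = ∑_j a_ij b_j`, `σ` preserves the inner product, and `a`
    -- is invertible over `ℤ`:
    (a : Matrix (Fin n) (Fin n) ℤ)
    (hpres : ∀ i j : Fin n,
      (inner ℝ (∑ k, (a i k : ℝ) • b k) (∑ k, (a j k : ℝ) • b k) : ℝ) =
        (inner ℝ (b i) (b j) : ℝ))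
    (hunit : IsUnit a.det) :
    ∀ i j : Fin n, |a i j| ≤ 3 ^ (n - 1) :=
  stmt_4_general n b hint hdet hsize hlovasz a hpres
end

section
/- Let $L$ be an invertible $G$-lattice and $e \in L$ with $\langle e, e \rangle = 1$. Then $\{\sigma e : \sigma \in G\}$ generates $L$ as an abelian group, and the map $\sigma \mapsto \sigma e$ is a bijection from $G$ to the set of vectors of length 1 in $L$. -/
/-!
Suppose `σ ≠ 1` fixes the unit vector `e`; put `q = ord σ`, let `e_q` be the vector provided by
invertibility, and `V = ZMod q ⊗ L`, free of rank `n = #G / 2` over `ZMod q`. The orbit of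
`1 ⊗ e_q` spans `V`. Since `u` acts as `-1` and `u ∉ ⟨σ⟩` (all of `⟨σ⟩` fixes `e`), already the
vectors `σʲ τ (1 ⊗ e_q)`, with `τ` running over representatives of `G / ⟨u, σ⟩`, span `V`. There
are at most `n` of them, so they form a basis which `σ` permutes in cycles of length `q`; hence
the fixed vector `1 ⊗ e` is a norm `∑ⱼ σʲ w`. The `σ`-invariant functional `B(-, e)` mod `q`
takes the value `q • B(w, e) = 0` on it, contradicting `B(e, e) = 1`.

So `σ ↦ σ e` is injective, and the `n` unit vectors `τ e`, `τ ∈ G / ⟨u⟩`, are pairwise neither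
equal nor opposite, hence orthonormal. An orthonormal family of `n` vectors in a positive
definite lattice of rank `n` spans it, and its only unit vectors are the `±τ e`.
-/

/-- A `G`-lattice `(L, B, ρ)` is *invertible* if it has rank `#G/2`, is
unimodular, and for every `m > 0` there is `e_m ∈ L` whose `G`-orbit generates
`L/mL` as an abelian group. -/
def GInvertible (G : Type*) [CommGroup G] [Fintype G] (u : G) (L : Type*)
    [AddCommGroup L] (B : L →ₗ[ℤ] L →ₗ[ℤ] ℤ) (ρ : G →* (L ≃ₗ[ℤ] L)) : Prop :=
  (Module.finrank ℤ L = Fintype.card G / 2) ∧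
  (Function.Bijective fun x : L => B x) ∧
  (∀ m : ℕ, 0 < m → ∃ e : L,
    Submodule.span ℤ
      ((Set.range fun σ : G => ρ σ e) ∪ (Set.range fun y : L => (m : ℤ) • y)) = ⊤)

open Module
open scoped TensorProduct

section PositiveDefinite

variable {L : Type*} [AddCommGroup L] {B : L →ₗ[ℤ] L →ₗ[ℤ] ℤ}

theorem apply_eq_zero_of_ne_of_ne_neg (hsymm : ∀ x y : L, B x y = B y x)
    (hpos : ∀ x : L, x ≠ 0 → 0 < B x x) {v w : L} (hv : B v v = 1) (hw : B w w = 1)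
    (hvw : v ≠ w) (hvw' : v ≠ -w) : B v w = 0 := by
  have hsub := hpos (v - w) (sub_ne_zero.2 hvw)
  have hadd := hpos (v + w) fun h => hvw' (eq_neg_of_add_eq_zero_left h)
  simp only [map_sub, map_add, LinearMap.sub_apply, LinearMap.add_apply, hv, hw, hsymm w v]
    at hsub hadd
  omega

theorem linearIndependent_option_elim (hpos : ∀ x : L, x ≠ 0 → 0 < B x x) {ι : Type*}
    [Fintype ι] {v : ι → L} (hv : LinearIndependent ℤ v) {y : L} (hy₀ : y ≠ 0)
    (hy : ∀ i, B y (v i) = 0) : LinearIndependent ℤ fun o : Option ι => o.elim y v := by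
  rw [Fintype.linearIndependent_iff]
  intro c hc
  have hnone : c none = 0 := by
    have := congrArg (B y) hc
    simp only [Fintype.sum_option, Option.elim_none, Option.elim_some, map_add, map_sum,
      map_smul, hy, map_zero, smul_eq_mul, mul_zero, Finset.sum_const_zero, add_zero] at this
    exact (mul_eq_zero.1 this).resolve_right (hpos y hy₀).ne'
  have hsome := Fintype.linearIndependent_iff.1 hv (fun i => c (some i)) (by
    simpa [Fintype.sum_option, hnone] using hc)
  rintro (_ | i)
  exacts [hnone, hsome i]

theorem eq_zero_of_forall_apply_eq_zero (hpos : ∀ x : L, x ≠ 0 → 0 < B x x) {ι : Type*}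
    [Fintype ι] {v : ι → L} (hv : LinearIndependent ℤ v)
    (hrank : Module.rank ℤ L ≤ Fintype.card ι) {y : L} (hy : ∀ i, B y (v i) = 0) :
    y = 0 := by
  by_contra hy₀
  have h := (linearIndependent_option_elim hpos hv hy₀ hy).cardinal_lift_le_rank
  rw [Cardinal.mk_option, Cardinal.mk_fintype] at h
  have := h.trans (Cardinal.lift_le.2 hrank)
  norm_cast at this
  simp at this

theorem finite_and_free_of_finrank_pos (hpos : ∀ x : L, x ≠ 0 → 0 < B x x)
    (h : 0 < finrank ℤ L) : Module.Finite ℤ L ∧ Module.Free ℤ L := by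
  obtain ⟨v, hv⟩ := exists_linearIndependent_of_le_finrank (R := ℤ) (M := L) le_rfl
  have hrank : Module.rank ℤ L ≤ Fintype.card (Fin (finrank ℤ L)) := by
    rw [Fintype.card_fin, finrank, Cardinal.cast_toNat_of_lt_aleph0 (Cardinal.toNat_pos.1 h).2]
  let Φ : L →ₗ[ℤ] Fin (finrank ℤ L) → ℤ := LinearMap.pi fun i => B.flip (v i)
  have hΦ : Function.Injective Φ := by
    refine (injective_iff_map_eq_zero Φ).2 fun x hx => ?_
    exact eq_zero_of_forall_apply_eq_zero hpos hv hrank fun i => congrFun hx i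
  exact ⟨.of_injective Φ hΦ, .of_equiv (LinearEquiv.ofInjective Φ hΦ).symm⟩

theorem linearIndependent_of_orthonormal {ι : Type*} [Fintype ι] [DecidableEq ι] {f : ι → L}
    (hf : ∀ i j, B (f i) (f j) = if i = j then 1 else 0) : LinearIndependent ℤ f := by
  refine Fintype.linearIndependent_iff.2 fun c hc j => ?_
  simpa [map_sum, hf] using congrArg (fun x => B x (f j)) hc

theorem sum_smul_eq_of_orthonormal (hpos : ∀ x : L, x ≠ 0 → 0 < B x x) [Module.Finite ℤ L]
    {ι : Type*} [Fintype ι] [DecidableEq ι] {f : ι → L}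
    (hf : ∀ i j, B (f i) (f j) = if i = j then 1 else 0)
    (hcard : finrank ℤ L ≤ Fintype.card ι) (x : L) : ∑ i, B x (f i) • f i = x := by
  refine (sub_eq_zero.1 (eq_zero_of_forall_apply_eq_zero hpos
    (linearIndependent_of_orthonormal hf) ?_ fun j => ?_)).symm
  · rw [← finrank_eq_rank]
    exact_mod_cast hcard
  · simp [map_sum, hf]

theorem span_eq_top_of_orthonormal (hpos : ∀ x : L, x ≠ 0 → 0 < B x x) [Module.Finite ℤ L]
    {ι : Type*} [Fintype ι] [DecidableEq ι] {f : ι → L}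
    (hf : ∀ i j, B (f i) (f j) = if i = j then 1 else 0)
    (hcard : finrank ℤ L ≤ Fintype.card ι) : Submodule.span ℤ (Set.range f) = ⊤ :=
  eq_top_iff.2 fun x _ => sum_smul_eq_of_orthonormal hpos hf hcard x ▸
    Submodule.sum_mem _ fun i _ => Submodule.smul_mem _ _ (Submodule.subset_span ⟨i, rfl⟩)

theorem exists_eq_or_eq_neg_of_orthonormal (hsymm : ∀ x y : L, B x y = B y x)
    (hpos : ∀ x : L, x ≠ 0 → 0 < B x x) [Module.Finite ℤ L] {ι : Type*} [Fintype ι]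
    [DecidableEq ι] {f : ι → L} (hf : ∀ i j, B (f i) (f j) = if i = j then 1 else 0)
    (hcard : finrank ℤ L ≤ Fintype.card ι) {x : L} (hx : B x x = 1) :
    ∃ i, x = f i ∨ x = -f i := by
  by_contra! h
  have hx₀ : x = 0 := by
    rw [← sum_smul_eq_of_orthonormal hpos hf hcard x]
    refine Finset.sum_eq_zero fun i _ => ?_
    rw [apply_eq_zero_of_ne_of_ne_neg hsymm hpos hx (by simpa using hf i i) (h i).1 (h i).2,
      zero_smul]
  simp [hx₀] at hx

end PositiveDefinite

section CyclicShift

variable {K V C : Type*} [CommRing K] [AddCommGroup V] [Module K V] {q : ℕ}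

theorem repr_apply_add_one_of_shift (b : Basis (ZMod q × C) K V) {T : V →ₗ[K] V}
    (hT : ∀ j c, T (b (j, c)) = b (j + 1, c)) (x : V) (j : ZMod q) (c : C) :
    b.repr (T x) (j + 1, c) = b.repr x (j, c) := by
  have : (b.coord (j + 1, c)).comp T = b.coord (j, c) := by
    refine b.ext fun ⟨i, d⟩ => ?_
    classical
    simp [hT, Finsupp.single_apply]
  exact LinearMap.congr_fun this x

theorem exists_sum_pow_eq_of_shift [Fintype C] [NeZero q] (b : Basis (ZMod q × C) K V)
    {T : V →ₗ[K] V} (hT : ∀ j c, T (b (j, c)) = b (j + 1, c)) {v : V} (hv : T v = v) :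
    ∃ w, ∑ j : ZMod q, (T ^ j.val) w = v := by
  have hconst : ∀ (j : ZMod q) c, b.repr v (j, c) = b.repr v (0, c) := by
    have : ∀ (k : ℕ) c, b.repr v ((k : ZMod q), c) = b.repr v (0, c) := by
      intro k c
      induction k with
      | zero => simp
      | succ k ih => rw [Nat.cast_succ, ← hv, repr_apply_add_one_of_shift b hT, hv, ih]
    intro j c
    simpa using this j.val c
  have hpow : ∀ (k : ℕ) c, (T ^ k) (b (0, c)) = b (k, c) := by
    intro k c
    induction k with
    | zero => simp
    | succ k ih => rw [pow_succ', Module.End.mul_apply, ih, hT, Nat.cast_succ]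
  refine ⟨∑ c, b.repr v (0, c) • b (0, c), ?_⟩
  conv_rhs => rw [← b.sum_repr v, Fintype.sum_prod_type]
  simp only [map_sum, map_smul, hpow, ZMod.natCast_val, ZMod.cast_id', id, hconst]

end CyclicShift

theorem Subgroup.two_mul_card_le_card_of_lt {G : Type*} [Group G] {H K : Subgroup G} [Finite K]
    (h : H < K) : 2 * Nat.card H ≤ Nat.card K := by
  obtain ⟨m, hm⟩ := Subgroup.card_dvd_of_le h.le
  have hm₀ : m ≠ 0 := by
    rintro rfl
    exact Nat.card_pos.ne' (hm.trans (mul_zero _))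
  have hm₁ : m ≠ 1 := by
    rintro rfl
    exact h.ne (Subgroup.eq_of_le_of_card_ge h.le (by rw [hm, mul_one]))
  rw [hm, mul_comm 2]
  exact Nat.mul_le_mul_left _ (by omega)

theorem apply_mul_eq_or_eq_neg_of_mem_zpowers {V G : Type*} [AddCommGroup V] [Group G]
    [Finite G] {u : G} {f : G → V} (hfu : ∀ σ, f (u * σ) = -f σ)
    {y : G} (hy : y ∈ Subgroup.zpowers u) (σ : G) : f (y * σ) = f σ ∨ f (y * σ) = -f σ := by
  obtain ⟨k, rfl⟩ := mem_powers_iff_mem_zpowers.2 hy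
  clear hy
  induction k generalizing σ with
  | zero => simp
  | succ k ih => rcases ih (u * σ) with h | h <;> simp [pow_succ, mul_assoc, h, hfu]

theorem exists_sum_pow_eq_of_orbit {K V G : Type*} [CommRing K] [OrzechProperty K]
    [AddCommGroup V] [Module K V] [CommGroup G] [Fintype G] {u g : G}
    (hug : u ∉ Subgroup.zpowers g) {f : G → V} (hfu : ∀ σ, f (u * σ) = -f σ)
    (hspan : Submodule.span K (Set.range f) = ⊤) (hcard : Fintype.card G ≤ 2 * finrank K V)
    {q : ℕ} [NeZero q] (hg : orderOf g = q)
    {T : V →ₗ[K] V} (hT : ∀ σ, T (f σ) = f (g * σ)) {v : V} (hv : T v = v) :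
    ∃ w, ∑ j : ZMod q, (T ^ j.val) w = v := by
  classical
  set P := Subgroup.zpowers u ⊔ Subgroup.zpowers g
  let F : ZMod q × (G ⧸ P) → V := fun jc => f (g ^ jc.1.val * jc.2.out)
  have hFspan : ⊤ ≤ Submodule.span K (Set.range F) := by
    rw [← hspan, Submodule.span_le]
    rintro _ ⟨σ, rfl⟩
    obtain ⟨p, hp⟩ := QuotientGroup.mk_out_eq_mul P σ
    obtain ⟨y, hy, z, hz, hyz⟩ := Subgroup.mem_sup.1 (P.inv_mem p.2)
    obtain ⟨k, hk, rfl⟩ : ∃ k < q, g ^ k = z := by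
      simpa [hg] using mem_zpowers_iff_mem_range_orderOf.1 hz
    have hσ : σ = y * (g ^ (k : ZMod q).val * (σ : G ⧸ P).out) := by
      rw [ZMod.val_cast_of_lt hk, hp, ← mul_assoc, hyz, mul_left_comm, inv_mul_cancel, mul_one]
    have hF : F ((k : ZMod q), σ) ∈ Submodule.span K (Set.range F) :=
      Submodule.subset_span ⟨_, rfl⟩
    rcases apply_mul_eq_or_eq_neg_of_mem_zpowers hfu hy
      (g ^ (k : ZMod q).val * (σ : G ⧸ P).out) with h | h <;> rw [hσ, h]
    exacts [hF, neg_mem hF]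
  have hPcard : 2 * q ≤ Nat.card P := by
    rw [← hg, ← Nat.card_zpowers]
    refine Subgroup.two_mul_card_le_card_of_lt (lt_of_le_of_ne le_sup_right fun h => hug ?_)
    exact h ▸ Subgroup.mem_sup_left (Subgroup.mem_zpowers u)
  have hFcard : Fintype.card (ZMod q × (G ⧸ P)) ≤ finrank K V := by
    have := Subgroup.card_eq_card_quotient_mul_card_subgroup P
    rw [Fintype.card_prod, ZMod.card, ← Nat.card_eq_fintype_card (α := G ⧸ P)]
    rw [Nat.card_eq_fintype_card] at this
    nlinarith
  let b := Basis.mk (linearIndependent_of_top_le_span_of_card_le_finrank hFspan hFcard) hFspan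
  refine exists_sum_pow_eq_of_shift b (fun j c => ?_) hv
  simp only [b, Basis.mk_apply, F, hT, ← mul_assoc, ← pow_succ']
  congr 2
  rw [pow_eq_pow_iff_modEq, hg, ← ZMod.natCast_eq_natCast_iff]
  simp

theorem span_one_tmul_eq_top {M : Type*} [AddCommGroup M] {q : ℕ} {s : Set M}
    (hs : Submodule.span ℤ (s ∪ Set.range fun y : M => (q : ℤ) • y) = ⊤) :
    Submodule.span (ZMod q) (TensorProduct.mk ℤ (ZMod q) M 1 '' s) = ⊤ := by
  rw [eq_top_iff, ← Submodule.baseChange_top, ← hs, Submodule.baseChange_span,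
    Submodule.span_le]
  rintro _ ⟨x, hx | ⟨y, rfl⟩, rfl⟩
  · exact Submodule.subset_span ⟨x, hx, rfl⟩
  · simp [← Nat.cast_smul_eq_nsmul (ZMod q)]

theorem liftBaseChange_baseChange_pow_apply {R A M : Type*} [CommRing R] [CommRing A]
    [Algebra R A] [AddCommGroup M] [Module R M] {l : M →ₗ[R] A} {g : M →ₗ[R] M}
    (hl : ∀ x, l (g x) = l x) (k : ℕ) (x : A ⊗[R] M) :
    l.liftBaseChange A ((g.baseChange A ^ k) x) = l.liftBaseChange A x := by
  induction k generalizing x with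
  | zero => rfl
  | succ k ih =>
    rw [pow_succ, Module.End.mul_apply, ih]
    induction x using TensorProduct.induction_on with
    | zero => simp
    | tmul a y => simp [hl]
    | add y z hy hz => simp only [map_add, hy, hz]

theorem eq_one_of_apply_eq_self {G L : Type*} [CommGroup G] [Fintype G] [AddCommGroup L]
    [Module.Free ℤ L] {B : L →ₗ[ℤ] L →ₗ[ℤ] ℤ} {ρ : G →* (L ≃ₗ[ℤ] L)}
    (hρB : ∀ (σ : G) (x y : L), B (ρ σ x) (ρ σ y) = B x y) {u : G}
    (hρu : ∀ x : L, ρ u x = -x)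
    (hcard : Fintype.card G ≤ 2 * finrank ℤ L) {σ : G} {e' : L}
    (hspan : Submodule.span ℤ
      ((Set.range fun τ : G => ρ τ e') ∪ (Set.range fun y : L => (orderOf σ : ℤ) • y)) = ⊤)
    {e : L} (he : B e e = 1) (hσe : ρ σ e = e) : σ = 1 := by
  by_contra hσ
  set q := orderOf σ
  have : Fact (1 < q) := ⟨by
    have := orderOf_pos σ
    have : q ≠ 1 := fun h => hσ (orderOf_eq_one_iff.1 h)
    omega⟩
  let S : Subgroup G := (MulAction.stabilizer (L ≃ₗ[ℤ] L) e).comap ρ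
  have huσ : u ∉ Subgroup.zpowers σ := fun h => by
    have h' : -e = e := (hρu e).symm.trans (Subgroup.zpowers_le.2 (show σ ∈ S from hσe) h)
    simpa [he] using congrArg (fun x => B x e) h'
  let π := TensorProduct.mk ℤ (ZMod q) L 1
  let l : L →ₗ[ℤ] ZMod q := (Algebra.linearMap ℤ (ZMod q)).comp (B.flip e)
  have hl : ∀ x, l (ρ σ x) = l x := fun x => by
    simp only [l, LinearMap.comp_apply, LinearMap.flip_apply]
    rw [← hρB σ x e, hσe]
  obtain ⟨w, hw⟩ := exists_sum_pow_eq_of_orbit huσ (f := fun τ => π (ρ τ e'))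
    (fun τ => by simp [π, hρu, TensorProduct.tmul_neg])
    (by rw [Set.range_comp']; exact span_one_tmul_eq_top hspan)
    (by rwa [finrank_baseChange]) rfl (T := (ρ σ).toLinearMap.baseChange (ZMod q))
    (fun τ => by simp [π]) (v := π e) (by simp [π, hσe])
  have h₁ : l.liftBaseChange (ZMod q) (π e) = 1 := by simp [π, l, he]
  have h₀ : l.liftBaseChange (ZMod q) (π e) = 0 := by
    simp [← hw, liftBaseChange_baseChange_pow_apply (g := (ρ σ).toLinearMap) hl]
  exact one_ne_zero (h₁.symm.trans h₀)

theorem apply_injective_of_apply_self_eq_one {G L : Type*} [CommGroup G] [Fintype G]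
    [AddCommGroup L] [Module.Free ℤ L] {B : L →ₗ[ℤ] L →ₗ[ℤ] ℤ} {ρ : G →* (L ≃ₗ[ℤ] L)}
    (hρB : ∀ (σ : G) (x y : L), B (ρ σ x) (ρ σ y) = B x y) {u : G}
    (hρu : ∀ x : L, ρ u x = -x)
    (hcard : Fintype.card G ≤ 2 * finrank ℤ L)
    (hgen : ∀ m : ℕ, 0 < m → ∃ e : L, Submodule.span ℤ
      ((Set.range fun σ : G => ρ σ e) ∪ (Set.range fun y : L => (m : ℤ) • y)) = ⊤)
    {e : L} (he : B e e = 1) : Function.Injective fun σ : G => ρ σ e := by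
  intro σ τ h
  obtain ⟨e', he'⟩ := hgen _ (orderOf_pos (τ⁻¹ * σ))
  refine (inv_mul_eq_one.1 (eq_one_of_apply_eq_self hρB hρu hcard he' he ?_)).symm
  simp only at h
  simp [h]

theorem apply_out_orthonormal {G L : Type*} [CommGroup G] [AddCommGroup L]
    {B : L →ₗ[ℤ] L →ₗ[ℤ] ℤ} (hsymm : ∀ x y : L, B x y = B y x)
    (hpos : ∀ x : L, x ≠ 0 → 0 < B x x) {ρ : G →* (L ≃ₗ[ℤ] L)}
    (hρB : ∀ (σ : G) (x y : L), B (ρ σ x) (ρ σ y) = B x y) {u : G}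
    (hρu : ∀ x : L, ρ u x = -x)
    {e : L} (he : B e e = 1) (hinj : Function.Injective fun σ : G => ρ σ e)
    (γ δ : G ⧸ Subgroup.zpowers u) :
    B (ρ γ.out e) (ρ δ.out e) = if γ = δ then 1 else 0 := by
  split_ifs with hγδ
  · rw [hγδ, hρB, he]
  refine apply_eq_zero_of_ne_of_ne_neg hsymm hpos (by rw [hρB, he]) (by rw [hρB, he])
    (fun h => hγδ ?_) (fun h => hγδ ?_)
  · rw [← QuotientGroup.out_eq' γ, ← QuotientGroup.out_eq' δ, hinj h]
  · have : γ.out = δ.out * u := hinj (by simp [mul_comm δ.out, hρu, h])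
    rw [← QuotientGroup.out_eq' γ, ← QuotientGroup.out_eq' δ, this,
      QuotientGroup.mk_mul_of_mem _ (Subgroup.mem_zpowers u)]

/-- If `e` is a short vector of an invertible `G`-lattice `L`, then the
`G`-orbit of `e` generates `L` as an abelian group, and `σ ↦ σe` is a bijection
from `G` onto the set of short vectors of `L`. -/
theorem stmt_15 (G : Type*) [CommGroup G] [Fintype G]
    (u : G) (hu1 : u ≠ 1) (hu2 : u * u = 1)
    (L : Type*) [AddCommGroup L]
    (B : L →ₗ[ℤ] L →ₗ[ℤ] ℤ)
    (hsymm : ∀ x y : L, B x y = B y x)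
    (hpos : ∀ x : L, x ≠ 0 → 0 < B x x)
    (ρ : G →* (L ≃ₗ[ℤ] L))
    (hρB : ∀ (σ : G) (x y : L), B (ρ σ x) (ρ σ y) = B x y)
    (hρu : ∀ x : L, ρ u x = -x)
    (hinv : GInvertible G u L B ρ)
    (e : L) (he : B e e = 1) :
    (Submodule.span ℤ (Set.range fun σ : G => ρ σ e) = ⊤) ∧
    Function.Injective (fun σ : G => ρ σ e) ∧
    (Set.range fun σ : G => ρ σ e) = {x : L | B x x = 1} := by
  obtain ⟨hrank, -, hgen⟩ := hinv
  have hu : orderOf u = 2 := orderOf_eq_prime (by rw [sq, hu2]) hu1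
  have hcard : Fintype.card G = 2 * finrank ℤ L := by
    have := hu ▸ orderOf_dvd_card (x := u)
    omega
  obtain ⟨_, _⟩ := finite_and_free_of_finrank_pos hpos (by
    have := Fintype.card_pos (α := G)
    omega)
  have hinj := apply_injective_of_apply_self_eq_one hρB hρu hcard.le hgen he
  classical
  have hf := apply_out_orthonormal hsymm hpos hρB hρu he hinj
  have hΓ : finrank ℤ L ≤ Fintype.card (G ⧸ Subgroup.zpowers u) := by
    have := Subgroup.card_eq_card_quotient_mul_card_subgroup (Subgroup.zpowers u)
    rw [Nat.card_zpowers, hu, Nat.card_eq_fintype_card, Nat.card_eq_fintype_card] at this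
    omega
  have hsub : Set.range (fun γ : G ⧸ Subgroup.zpowers u => ρ γ.out e) ⊆
      Set.range fun σ => ρ σ e :=
    Set.range_comp_subset_range Quotient.out fun σ => ρ σ e
  refine ⟨eq_top_mono (Submodule.span_mono hsub) (span_eq_top_of_orthonormal hpos hf hΓ), hinj,
    subset_antisymm ?_ fun x hx => ?_⟩
  · rintro _ ⟨σ, rfl⟩
    exact (hρB σ e e).trans he
  · obtain ⟨γ, rfl | rfl⟩ := exists_eq_or_eq_neg_of_orthonormal hsymm hpos hf hΓ hx
    exacts [⟨_, rfl⟩, ⟨u * γ.out, by simp [hρu]⟩]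
end

section
/- Let $p$ be a prime with $p \equiv 1 \pmod k$, where $k$ is the exponent of a finite abelian group $G$ containing an element $u$ of order 2, and let $j \ge 1$. Then the exponent of the unit group $({\mathbb Z}\langle G \rangle/(p^j))^*$ equals $(p-1)p^{j-1}$. -/
/-! The trace `a_1 - a_u` is an additive functional on `ℤ⟨G⟩` taking the value `1` at `1`
(because `u ≠ 1`), so `ℤ⟨G⟩/(pʲ)` has characteristic `pʲ` and contains `(ℤ/pʲ)ˣ`; as `p` is odd
(`2 = ord u ∣ k ∣ p - 1`) this group is cyclic of order `(p - 1)pʲ⁻¹`. Conversely `σᵖ = σ` for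
every `σ ∈ G` and `bᵖ ≡ b` in `ℤ`, so every `x ∈ ℤ⟨G⟩` satisfies `xᵖ ≡ x (mod p)`. For a unit this
reads `xᵖ⁻¹ = 1 + p y`, and raising to the power `pʲ⁻¹` gives `1` modulo `pʲ`. -/

/-- The ideal `(u+1)` of the group ring `A[G]`. -/
noncomputable def modIdeal (A : Type*) [CommRing A] (G : Type*) [CommGroup G] (u : G) :
    Ideal (MonoidAlgebra A G) :=
  Ideal.span {MonoidAlgebra.single u 1 + 1}

/-- The modified group ring `A⟨G⟩ = A[G]/(u+1)`. -/
noncomputable abbrev ModGR (A : Type*) [CommRing A] (G : Type*) [CommGroup G] (u : G) :=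
  MonoidAlgebra A G ⧸ modIdeal A G u

/-- The scaled trace `t : A⟨G⟩ → A`, sending (the class of) `∑ a_σ σ` to `a_1 - a_u`. -/
noncomputable def tr {A : Type*} [CommRing A] {G : Type*} [CommGroup G] {u : G}
    (hu : u * u = 1) (x : ModGR A G u) : A :=
  Quotient.liftOn' x (fun f => f.coeff 1 - f.coeff u) (by
    intro f g h
    have h' : -f + g ∈ modIdeal A G u := QuotientAddGroup.leftRel_apply.mp h
    have hfg : g - f ∈ modIdeal A G u := by
      have : -f + g = g - f := by abel
      rwa [this] at h'
    obtain ⟨w, hw⟩ := Ideal.mem_span_singleton.mp hfg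
    have huinv : u⁻¹ = u := inv_eq_of_mul_eq_one_right hu
    have key : ∀ y : G, g.coeff y - f.coeff y = w.coeff (u⁻¹ * y) + w.coeff y := by
      intro y
      rw [← Finsupp.sub_apply, ← MonoidAlgebra.coeff_sub, hw, add_mul, one_mul,
        MonoidAlgebra.coeff_add, Finsupp.add_apply,
        MonoidAlgebra.coeff_single_mul_apply, one_mul]
    have e1 := key 1
    have e2 := key u
    rw [mul_one, huinv] at e1
    rw [inv_mul_cancel] at e2
    show f.coeff 1 - f.coeff u = g.coeff 1 - g.coeff u
    linear_combination e2 - e1)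

section Frobenius

variable {R : Type*} [CommRing R] {p : ℕ}

theorem natCast_dvd_add_pow_sub (hp : p.Prime) {x y : R} (hx : (p : R) ∣ x ^ p - x)
    (hy : (p : R) ∣ y ^ p - y) : (p : R) ∣ (x + y) ^ p - (x + y) := by
  obtain ⟨r, hr⟩ := exists_add_pow_prime_eq hp x y
  have hsum : (x + y) ^ p - (x + y) = (x ^ p - x) + (y ^ p - y) + p * (x * y * r) := by
    rw [hr]; ring
  rw [hsum]
  exact dvd_add (dvd_add hx hy) (dvd_mul_right _ _)

theorem MonoidAlgebra.natCast_dvd_pow_sub {G : Type*} [CommMonoid G] (hp : p.Prime)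
    (hR : ∀ b : R, (p : R) ∣ b ^ p - b) (hG : ∀ σ : G, σ ^ p = σ) (f : MonoidAlgebra R G) :
    (p : MonoidAlgebra R G) ∣ f ^ p - f := by
  induction f using MonoidAlgebra.induction with
  | zero => simp [zero_pow hp.ne_zero]
  | single_add a b f _ _ ih =>
    refine natCast_dvd_add_pow_sub hp ?_ ih
    obtain ⟨c, hc⟩ := hR b
    refine ⟨MonoidAlgebra.single a c, ?_⟩
    rw [MonoidAlgebra.single_pow, hG, ← MonoidAlgebra.single_sub, hc, MonoidAlgebra.natCast_def,
      MonoidAlgebra.single_mul_single, one_mul]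

theorem Int.natCast_dvd_pow_sub (hp : p.Prime) (b : ℤ) : (p : ℤ) ∣ b ^ p - b := by
  have : Fact p.Prime := ⟨hp⟩
  rw [← ZMod.intCast_zmod_eq_zero_iff_dvd]
  push_cast
  rw [ZMod.pow_card, sub_self]

theorem Function.Surjective.natCast_dvd_pow_sub {S : Type*} [CommRing S] {f : R →+* S}
    (hf : Function.Surjective f) (h : ∀ x : R, (p : R) ∣ x ^ p - x) (y : S) :
    (p : S) ∣ y ^ p - y := by
  obtain ⟨x, rfl⟩ := hf y
  simpa only [map_natCast, map_sub, map_pow] using map_dvd f (h x)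

theorem Monoid.exponent_units_dvd_of_natCast_dvd_pow_sub (hp : 0 < p) {j : ℕ} (hj : 1 ≤ j)
    (hpj : (p : R) ^ j = 0) (h : ∀ x : R, (p : R) ∣ x ^ p - x) :
    Monoid.exponent Rˣ ∣ (p - 1) * p ^ (j - 1) := by
  refine Monoid.exponent_dvd_of_forall_pow_eq_one fun x => Units.ext ?_
  have hx : (p : R) ∣ (x : R) ^ (p - 1) - 1 := by
    have hfactor : (x : R) ^ p - x = x * ((x : R) ^ (p - 1) - 1) := by
      conv_lhs => rw [← Nat.sub_add_cancel hp]
      ring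
    have := (h x).mul_left (↑x⁻¹ : R)
    rwa [hfactor, ← mul_assoc, Units.inv_mul, one_mul] at this
  have := dvd_sub_pow_of_dvd_sub hx (j - 1)
  rw [Nat.sub_add_cancel hj, hpj, zero_dvd_iff, one_pow, sub_eq_zero, ← pow_mul] at this
  simpa only [Units.val_pow_eq_pow_val, Units.val_one] using this

end Frobenius

section Trace

variable {A : Type*} [CommRing A] {G : Type*} [CommGroup G] {u : G}

theorem tr_mk (hu : u * u = 1) (f : MonoidAlgebra A G) :
    tr hu (Ideal.Quotient.mk (modIdeal A G u) f) = f.coeff 1 - f.coeff u :=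
  rfl

noncomputable def trAddMonoidHom (hu : u * u = 1) : ModGR A G u →+ A where
  toFun := tr hu
  map_zero' := by
    rw [← map_zero (Ideal.Quotient.mk (modIdeal A G u)), tr_mk]
    simp
  map_add' x y := by
    obtain ⟨f, rfl⟩ := Ideal.Quotient.mk_surjective x
    obtain ⟨g, rfl⟩ := Ideal.Quotient.mk_surjective y
    rw [← map_add, tr_mk, tr_mk, tr_mk]
    simp only [MonoidAlgebra.coeff_add, Finsupp.add_apply]
    ring

theorem trAddMonoidHom_one (hu : u * u = 1) (hu1 : u ≠ 1) :
    trAddMonoidHom hu (1 : ModGR A G u) = 1 := by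
  change tr hu (Ideal.Quotient.mk _ 1) = 1
  rw [tr_mk, MonoidAlgebra.one_def, MonoidAlgebra.coeff_single, Finsupp.single_eq_same,
    Finsupp.single_eq_of_ne' (Ne.symm hu1), sub_zero]

end Trace

theorem charP_quotient_span_natCast {R : Type*} [CommRing R] (t : R →+ ℤ) (ht : t 1 = 1)
    (m : ℕ) : CharP (R ⧸ Ideal.span {(m : R)}) m := by
  refine ⟨fun n => ?_⟩
  rw [← map_natCast (Ideal.Quotient.mk _), Ideal.Quotient.eq_zero_iff_mem,
    Ideal.mem_span_singleton']
  constructor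
  · rintro ⟨a, ha⟩
    have htn : t (n : R) = n := by rw [← nsmul_one, map_nsmul, ht, nsmul_one]
    rw [← ha, mul_comm, ← nsmul_eq_mul, map_nsmul, nsmul_eq_mul] at htn
    exact Int.natCast_dvd_natCast.mp ⟨t a, htn.symm⟩
  · rintro ⟨c, rfl⟩
    exact ⟨c, by push_cast; ring⟩

theorem CharP.exponent_units_zmod_dvd (S : Type*) [CommRing S] (n : ℕ) [CharP S n] :
    Monoid.exponent (ZMod n)ˣ ∣ Monoid.exponent Sˣ :=
  Monoid.exponent_dvd_of_monoidHom _ (Units.map_injective (ZMod.castHom_injective S))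

theorem Monoid.exponent_units_zmod_prime_pow {p : ℕ} (hp : p.Prime) (hp2 : p ≠ 2) {j : ℕ}
    (hj : 1 ≤ j) : Monoid.exponent (ZMod (p ^ j))ˣ = (p - 1) * p ^ (j - 1) := by
  have : NeZero p := ⟨hp.ne_zero⟩
  rw [← ArithmeticFunction.carmichael_eq_exponent',
    ArithmeticFunction.carmichael_pow_of_prime_ne_two j hp hp2, Nat.totient_prime_pow hp hj,
    mul_comm]

theorem pow_eq_self_of_exponent_dvd_sub_one {G : Type*} [Monoid G] {p : ℕ} (hp : 0 < p)
    (h : Monoid.exponent G ∣ p - 1) (σ : G) : σ ^ p = σ := by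
  obtain ⟨t, ht⟩ := h
  rw [← Nat.sub_add_cancel hp, pow_succ, ht, pow_mul, Monoid.pow_exponent_eq_one, one_pow,
    one_mul]

theorem stmt_18_general (G : Type*) [CommGroup G] (u : G) (hu1 : u ≠ 1)
    (hu2 : u * u = 1) (p : ℕ) (hp : p.Prime)
    (hpk : p ≡ 1 [MOD Monoid.exponent G]) (j : ℕ) (hj : 1 ≤ j) :
    Monoid.exponent
        ((ModGR ℤ G u ⧸ Ideal.span {((p : ModGR ℤ G u) ^ j)})ˣ) =
      (p - 1) * p ^ (j - 1) := by
  have hk : Monoid.exponent G ∣ p - 1 := (Nat.modEq_iff_dvd' hp.one_lt.le).mp hpk.symm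
  have hp2 : p ≠ 2 := by
    have h2 : 2 ∣ Monoid.exponent G := by
      have : Fact (Nat.Prime 2) := ⟨Nat.prime_two⟩
      exact orderOf_eq_prime (by rwa [pow_two]) hu1 ▸ Monoid.order_dvd_exponent u
    rintro rfl
    exact absurd (h2.trans hk) (by norm_num)
  rw [← Nat.cast_pow]
  set S := ModGR ℤ G u ⧸ Ideal.span {((p ^ j : ℕ) : ModGR ℤ G u)}
  have : CharP S (p ^ j) := charP_quotient_span_natCast _ (trAddMonoidHom_one hu2 hu1) _
  have hmk : Function.Surjective
      ((Ideal.Quotient.mk _).comp (Ideal.Quotient.mk _) : MonoidAlgebra ℤ G →+* S) :=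
    Ideal.Quotient.mk_surjective.comp Ideal.Quotient.mk_surjective
  have hfrob : ∀ x : S, (p : S) ∣ x ^ p - x :=
    hmk.natCast_dvd_pow_sub (S := S) <|
      MonoidAlgebra.natCast_dvd_pow_sub hp (Int.natCast_dvd_pow_sub hp)
        (pow_eq_self_of_exponent_dvd_sub_one hp.pos hk)
  have hpj : (p : S) ^ j = 0 := by rw [← Nat.cast_pow, CharP.cast_eq_zero]
  refine Nat.dvd_antisymm
    (Monoid.exponent_units_dvd_of_natCast_dvd_pow_sub (R := S) hp.pos hj hpj hfrob) ?_
  rw [← Monoid.exponent_units_zmod_prime_pow hp hp2 hj]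
  exact CharP.exponent_units_zmod_dvd S (p ^ j)

/-- If `p ≡ 1 (mod k)` where `k` is the exponent of `G`, then the exponent of
`(ℤ⟨G⟩/(pʲ))*` is `(p-1)p^(j-1)`. -/
theorem stmt_18 (G : Type*) [CommGroup G] [Fintype G] (u : G) (hu1 : u ≠ 1)
    (hu2 : u * u = 1) (p : ℕ) (hp : p.Prime)
    (hpk : p ≡ 1 [MOD Monoid.exponent G]) (j : ℕ) (hj : 1 ≤ j) :
    Monoid.exponent
        ((ModGR ℤ G u ⧸ Ideal.span {((p : ModGR ℤ G u) ^ j)})ˣ) =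
      (p - 1) * p ^ (j - 1) :=
  stmt_18_general G u hu1 hu2 p hp hpk j hj
end
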